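/- Let a>0 and let γ₀ ∈ (0,2), γ₁ ∈ (−2,0) with γ₀ − γ₁ < 2. Let (u,v) be any smooth solution on ℂ∖{0} of the system Δu = 4(e^{au} − e^{v−u}), Δv = 4(e^{v−u} − e^{−av}) with asymptotic data (γ₀,γ₁). Choose γ₁* ∈ (−2,γ₁) and let (u*,v*) be the unique solution with asymptotic data (0,γ₁*); choose γ̄₀ ∈ (γ₀,2) and let (ū,v̄) be the unique solution with asymptotic data (γ̄₀,0). Then ū < 0 < u* and v̄ < 0 < v*, and ū ≤ u ≤ u* and v̄ ≤ v ≤ v* on ℂ∖{0}. -/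

import Mathlib

/-!
Everything rests on a comparison principle: if `(u₁, v₁)` and `(u₂, v₂)` solve the system and the
data at `0` of the first are componentwise at least those of the second, then `u₁ ≤ u₂` and
`v₁ ≤ v₂`. Otherwise `max (u₁ - u₂) (v₁ - v₂) + ε log |z|` has a positive interior maximum on a
large annulus (it tends to `-∞` at `0` and is small on a large circle), whereas the system is
cooperative, so the Laplacian of the dominant difference is positive there. Comparing `(u, v)` with
`(u*, v*)` and `(ū, v̄)` gives the bounds; comparing `(ū, v̄)` with the zero solution gives
`ū, v̄ ≤ 0`, and the symmetry `(u, v) ↦ (-v, -u)` turns `(u*, v*)` into a solution of the same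
kind. The signs are strict by the strong maximum principle (proved through Hopf's lemma) for
`-ū ≥ 0`, which satisfies `Δ(-ū) ≤ C (-ū)` locally and is not identically zero since `γ̄₀ ≠ 0`;
then `v̄ = 0` at a point would force `ū ≥ 0` there.
-/

open Filter

/-- The Euclidean Laplacian of `f : ℂ → ℝ`, viewing `ℂ ≅ ℝ²` with orthonormal
directions `1` and `I`. -/
noncomputable def lap (f : ℂ → ℝ) (z : ℂ) : ℝ :=
  iteratedFDeriv ℝ 2 f z ![1, 1] + iteratedFDeriv ℝ 2 f z ![Complex.I, Complex.I]

/-- `f` is smooth on `ℂ ∖ {0}`. -/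
def SmoothOffZero (f : ℂ → ℝ) : Prop := ContDiffOn ℝ (⊤ : ℕ∞) f {(0 : ℂ)}ᶜ

/-- `f z → 0` as `|z| → ∞`. -/
def TendstoZeroAtInfty (f : ℂ → ℝ) : Prop :=
  Tendsto f (comap (fun z : ℂ => ‖z‖) atTop) (nhds 0)

/-- `f z / log |z| → γ` as `z → 0`. -/
def LogAsymAtZero (γ : ℝ) (f : ℂ → ℝ) : Prop :=
  Tendsto (fun z : ℂ => f z / Real.log ‖z‖) (nhdsWithin 0 {(0 : ℂ)}ᶜ) (nhds γ)

/-- `(u, v)` is a smooth solution on `ℂ ∖ {0}` of the two-function tt*-Toda system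
`Δu = 4(e^{au} − e^{v−u})`, `Δv = 4(e^{v−u} − e^{−bv})`. -/
def IsTodaSol (a b : ℝ) (u v : ℂ → ℝ) : Prop :=
  SmoothOffZero u ∧ SmoothOffZero v ∧
  ∀ z : ℂ, z ≠ 0 →
    lap u z = 4 * (Real.exp (a * u z) - Real.exp (v z - u z)) ∧
    lap v z = 4 * (Real.exp (v z - u z) - Real.exp (-(b * v z)))

/-- `(u, v)` has asymptotic data `(γ, δ)`: `u, v → 0` at `∞` and
`u(z)/log|z| → γ`, `v(z)/log|z| → δ` at `0`. -/
def HasAsymData (γ δ : ℝ) (u v : ℂ → ℝ) : Prop :=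
  TendstoZeroAtInfty u ∧ TendstoZeroAtInfty v ∧ LogAsymAtZero γ u ∧ LogAsymAtZero δ v

open Topology Metric Set InnerProductSpace Laplacian

section SecondDerivative

variable {E F : Type*} [NormedAddCommGroup E] [NormedSpace ℝ E]
  [NormedAddCommGroup F] [NormedSpace ℝ F]

theorem ContDiffAt.iteratedFDeriv_two_apply_self_eq_deriv_deriv {f : E → F} {x : E}
    (hf : ContDiffAt ℝ 2 f x) (v : E) :
    iteratedFDeriv ℝ 2 f x ![v, v] = deriv (deriv fun t : ℝ => f (x + t • v)) 0 := by
  have hline : ∀ t : ℝ, HasDerivAt (fun s : ℝ => x + s • v) v t := fun t => by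
    simpa using ((hasDerivAt_id t).smul_const v).const_add x
  have hline_cont : Tendsto (fun t : ℝ => x + t • v) (𝓝 0) (𝓝 x) := by
    simpa using (hline 0).continuousAt.tendsto
  have hderiv : (deriv fun t : ℝ => f (x + t • v)) =ᶠ[𝓝 0] fun t => fderiv ℝ f (x + t • v) v := by
    filter_upwards [hline_cont.eventually (hf.eventually (by simp))] with t ht
    exact ((ht.differentiableAt (by simp)).hasFDerivAt.comp_hasDerivAt t (hline t)).deriv
  have hf' : HasFDerivAt (fderiv ℝ f) (fderiv ℝ (fderiv ℝ f) x) (x + (0 : ℝ) • v) := by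
    rw [zero_smul, add_zero]
    exact ((hf.fderiv_right (m := 1) (by decide)).differentiableAt one_ne_zero).hasFDerivAt
  have h1 : HasDerivAt (fun t : ℝ => fderiv ℝ f (x + t • v)) (fderiv ℝ (fderiv ℝ f) x v) 0 :=
    hf'.comp_hasDerivAt (0 : ℝ) (hline 0)
  have h2 : HasDerivAt (fun t : ℝ => fderiv ℝ f (x + t • v) v) (fderiv ℝ (fderiv ℝ f) x v v) 0 := by
    simpa using h1.clm_apply (hasDerivAt_const (0 : ℝ) v)
  rw [hderiv.deriv_eq, iteratedFDeriv_two_apply]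
  exact h2.deriv.symm

theorem IsLocalMax.deriv_deriv_nonpos {g : ℝ → ℝ} {t : ℝ} (h : IsLocalMax g t)
    (hg : ContinuousAt g t) : deriv (deriv g) t ≤ 0 := by
  by_contra! hpos
  have hconst : g =ᶠ[𝓝 t] fun _ => g t :=
    (h.and (isLocalMin_of_deriv_deriv_pos hpos h.deriv_eq_zero hg)).mono
      fun s hs => le_antisymm hs.1 hs.2
  simp [hconst.deriv.deriv_eq] at hpos

theorem IsLocalMax.iteratedFDeriv_two_apply_self_nonpos {f : E → ℝ} {x : E}
    (hf : ContDiffAt ℝ 2 f x) (h : IsLocalMax f x) (v : E) :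
    iteratedFDeriv ℝ 2 f x ![v, v] ≤ 0 := by
  have hline : ContinuousAt (fun t : ℝ => x + t • v) 0 := by fun_prop
  rw [hf.iteratedFDeriv_two_apply_self_eq_deriv_deriv]
  have h' : IsLocalMax f (x + (0 : ℝ) • v) := by simpa using h
  exact IsLocalMax.deriv_deriv_nonpos (h'.comp_continuous (g := fun t : ℝ => x + t • v) hline)
    (hf.continuousAt.comp_of_eq hline (by simp))

end SecondDerivative

section Laplacian

variable {E : Type*} [NormedAddCommGroup E] [InnerProductSpace ℝ E] [FiniteDimensional ℝ E]

theorem IsLocalMax.laplacian_nonpos {f : E → ℝ} {x : E} (hf : ContDiffAt ℝ 2 f x)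
    (h : IsLocalMax f x) : Δ f x ≤ 0 := by
  rw [laplacian_eq_iteratedFDeriv_stdOrthonormalBasis]
  exact Finset.sum_nonpos fun i _ => h.iteratedFDeriv_two_apply_self_nonpos hf _

theorem IsLocalMin.laplacian_nonneg {f : E → ℝ} {x : E} (hf : ContDiffAt ℝ 2 f x)
    (h : IsLocalMin f x) : 0 ≤ Δ f x := by
  have := IsLocalMax.laplacian_nonpos (f := -f) hf.neg h.neg
  rwa [laplacian_neg, Pi.neg_apply, neg_nonpos] at this

end Laplacian

section Gaussian

theorem hasDerivAt_exp_neg_mul_quadratic (α A B C t : ℝ) :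
    HasDerivAt (fun s => Real.exp (-(α * (A + B * s + C * s ^ 2))))
      (-(α * (B + 2 * C * t)) * Real.exp (-(α * (A + B * t + C * t ^ 2)))) t := by
  have hq : HasDerivAt (fun s => -(α * (A + B * s + C * s ^ 2))) (-(α * (B + 2 * C * t))) t := by
    refine ((((hasDerivAt_id' t).const_mul B).const_add A).fun_add
      ((hasDerivAt_pow 2 t).const_mul C)).const_mul α |>.fun_neg |>.congr_deriv ?_
    push_cast; ring
  simpa [mul_comm] using hq.exp

theorem deriv_deriv_exp_neg_mul_quadratic (α A B C : ℝ) :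
    deriv (deriv fun s => Real.exp (-(α * (A + B * s + C * s ^ 2)))) 0
      = (α ^ 2 * B ^ 2 - 2 * α * C) * Real.exp (-(α * A)) := by
  have hd : (deriv fun s => Real.exp (-(α * (A + B * s + C * s ^ 2))))
      = fun t => -(α * (B + 2 * C * t)) * Real.exp (-(α * (A + B * t + C * t ^ 2))) :=
    funext fun t => (hasDerivAt_exp_neg_mul_quadratic α A B C t).deriv
  have hlin : HasDerivAt (fun t : ℝ => -(α * (B + 2 * C * t))) (-(α * (2 * C))) 0 := by
    simpa using (((hasDerivAt_id' (0 : ℝ)).const_mul (2 * C)).const_add B |>.const_mul α).fun_neg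
  rw [hd, (hlin.fun_mul (hasDerivAt_exp_neg_mul_quadratic α A B C 0)).deriv]
  ring_nf

variable {E : Type*} [NormedAddCommGroup E] [InnerProductSpace ℝ E]

theorem contDiff_exp_neg_mul_norm_sub_sq (α : ℝ) (w : E) :
    ContDiff ℝ 2 fun y : E => Real.exp (-(α * ‖y - w‖ ^ 2)) := by
  have := (contDiff_norm_sq ℝ (E := E) (n := 2)).comp (contDiff_id.sub (contDiff_const (c := w)))
  exact Real.contDiff_exp.comp (contDiff_const.mul this).neg

theorem hasDerivAt_exp_neg_mul_norm_segment_sub_sq (α : ℝ) (q w : E) :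
    HasDerivAt (fun t : ℝ => Real.exp (-(α * ‖q + t • (w - q) - w‖ ^ 2)))
      (2 * α * ‖q - w‖ ^ 2 * Real.exp (-(α * ‖q - w‖ ^ 2))) 0 := by
  have hseg : ∀ t : ℝ, ‖q + t • (w - q) - w‖ ^ 2
      = ‖q - w‖ ^ 2 + (-2 * ‖q - w‖ ^ 2) * t + ‖q - w‖ ^ 2 * t ^ 2 := fun t => by
    rw [show q + t • (w - q) - w = (1 - t) • (q - w) by module, norm_smul, mul_pow,
      Real.norm_eq_abs, sq_abs]
    ring
  simp_rw [hseg]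
  refine (hasDerivAt_exp_neg_mul_quadratic α _ _ _ 0).congr_deriv ?_
  ring_nf

variable [FiniteDimensional ℝ E]

theorem laplacian_exp_neg_mul_norm_sub_sq (α : ℝ) (w x : E) :
    Δ (fun y : E => Real.exp (-(α * ‖y - w‖ ^ 2))) x
      = (4 * α ^ 2 * ‖x - w‖ ^ 2 - 2 * Module.finrank ℝ E * α) * Real.exp (-(α * ‖x - w‖ ^ 2)) := by
  set b := stdOrthonormalBasis ℝ E
  have hline : ∀ i, iteratedFDeriv ℝ 2 (fun y : E => Real.exp (-(α * ‖y - w‖ ^ 2))) x ![b i, b i]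
      = (α ^ 2 * (2 * inner ℝ (x - w) (b i)) ^ 2 - 2 * α) * Real.exp (-(α * ‖x - w‖ ^ 2)) := by
    intro i
    rw [(contDiff_exp_neg_mul_norm_sub_sq α w).contDiffAt
      |>.iteratedFDeriv_two_apply_self_eq_deriv_deriv]
    have hq : ∀ t : ℝ, ‖x + t • b i - w‖ ^ 2
        = ‖x - w‖ ^ 2 + 2 * inner ℝ (x - w) (b i) * t + 1 * t ^ 2 := fun t => by
      rw [show x + t • b i - w = (x - w) + t • b i by abel, norm_add_sq_real, norm_smul,
        inner_smul_right, b.orthonormal.1 i, Real.norm_eq_abs, mul_one, sq_abs]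
      ring
    simp_rw [hq]
    rw [deriv_deriv_exp_neg_mul_quadratic]
    ring
  have hsum : ∑ i, inner ℝ (x - w) (b i) ^ 2 = ‖x - w‖ ^ 2 := by
    rw [← real_inner_self_eq_norm_sq, ← b.sum_inner_mul_inner]
    simp [sq, real_inner_comm]
  rw [laplacian_eq_iteratedFDeriv_orthonormalBasis _ b]
  simp only [hline, ← Finset.sum_mul, Finset.sum_sub_distrib, mul_pow, ← Finset.mul_sum, hsum,
    Finset.sum_const, Finset.card_univ, Fintype.card_fin, nsmul_eq_mul]
  ring

end Gaussian

section MaximumPrinciple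

theorem HasDerivAt.le_of_eventually_le_nhdsGT {ψ₁ ψ₂ : ℝ → ℝ} {L₁ L₂ t : ℝ}
    (h₁ : HasDerivAt ψ₁ L₁ t) (h₂ : HasDerivAt ψ₂ L₂ t) (heq : ψ₁ t = ψ₂ t)
    (hle : ∀ᶠ s in 𝓝[>] t, ψ₁ s ≤ ψ₂ s) : L₁ ≤ L₂ := by
  have hslope : Tendsto (slope (ψ₂ - ψ₁) t) (𝓝[>] t) (𝓝 (L₂ - L₁)) :=
    (hasDerivAt_iff_tendsto_slope.1 (h₂.sub h₁)).mono_left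
      (nhdsWithin_mono _ fun s hs => ne_of_gt hs)
  have hnonneg : ∀ᶠ s in 𝓝[>] t, 0 ≤ slope (ψ₂ - ψ₁) t s := by
    filter_upwards [hle, self_mem_nhdsWithin] with s hs hst
    rw [slope_def_field, Pi.sub_apply, Pi.sub_apply, heq, sub_self, sub_zero]
    exact div_nonneg (sub_nonneg.2 hs) (sub_nonneg.2 (le_of_lt hst))
  linarith [ge_of_tendsto hslope hnonneg]

theorem dist_eq_or_dist_eq_of_mem_annulus {X : Type*} [PseudoMetricSpace X] {x w : X} {r R : ℝ}
    (hx : x ∈ (closedBall w R \ ball w r) \ (ball w R \ closedBall w r)) :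
    dist x w = R ∨ dist x w = r := by
  obtain ⟨⟨hR, hr⟩, hU⟩ := hx
  rw [mem_closedBall] at hR
  rw [mem_ball, not_lt] at hr
  by_contra! hne
  exact hU ⟨mem_ball.2 (hR.lt_of_ne hne.1), fun h => hne.2 (le_antisymm (mem_closedBall.1 h) hr)⟩

variable {E : Type*} [NormedAddCommGroup E] [InnerProductSpace ℝ E] [FiniteDimensional ℝ E]

theorem IsCompact.le_of_laplacian_lt {K U : Set E} {p g : E → ℝ} {C : ℝ} (hC : 0 ≤ C)
    (hK : IsCompact K) (hUK : U ⊆ K) (hU : IsOpen U) (hp : ContinuousOn p K)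
    (hg : ContinuousOn g K) (hbdry : ∀ x ∈ K \ U, g x ≤ p x)
    (hpU : ∀ x ∈ U, ContDiffAt ℝ 2 p x) (hgU : ∀ x ∈ U, ContDiffAt ℝ 2 g x)
    (hlap : ∀ x ∈ U, Δ p x ≤ C * p x) (hglap : ∀ x ∈ U, C * g x < Δ g x) :
    ∀ x ∈ K, g x ≤ p x := by
  intro x₁ hx₁
  by_contra! hlt
  have hpg : ContinuousOn (p - g) K := hp.sub hg
  obtain ⟨x₀, hx₀U, hmin⟩ := hK.exists_isMinOn_mem_subset hpg hx₁
    fun x hx => (sub_neg.2 hlt).trans_le (sub_nonneg.2 (hbdry x hx))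
  have hx₀ : p x₀ - g x₀ < 0 := (hmin hx₁).trans_lt (sub_neg.2 hlt)
  have hpg' : ContDiffAt ℝ 2 (p - g) x₀ := (hpU x₀ hx₀U).sub (hgU x₀ hx₀U)
  have hΔ := (hmin.isLocalMin (mem_of_superset (hU.mem_nhds hx₀U) hUK)).laplacian_nonneg hpg'
  rw [(hpU x₀ hx₀U).laplacian_sub (hgU x₀ hx₀U)] at hΔ
  nlinarith [hlap x₀ hx₀U, hglap x₀ hx₀U, mul_nonpos_of_nonneg_of_nonpos hC hx₀.le]

end MaximumPrinciple

section Hopf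

variable {E : Type*} [NormedAddCommGroup E] [InnerProductSpace ℝ E] [FiniteDimensional ℝ E]

theorem mul_exp_neg_mul_norm_sub_sq_lt_laplacian {C α ρ : ℝ} (hC : 0 ≤ C) (hα : 1 ≤ α)
    (hρ : 0 ≤ ρ) (hαρ : 2 * Module.finrank ℝ E + 1 + C ≤ α * ρ ^ 2) {w x : E}
    (hx : ρ / 2 ≤ dist x w) :
    C * Real.exp (-(α * ‖x - w‖ ^ 2)) < Δ (fun y : E => Real.exp (-(α * ‖y - w‖ ^ 2))) x := by
  have hρx : ρ ^ 2 ≤ 4 * ‖x - w‖ ^ 2 := by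
    rw [← dist_eq_norm]; nlinarith
  rw [laplacian_exp_neg_mul_norm_sub_sq]
  refine mul_lt_mul_of_pos_right ?_ (Real.exp_pos _)
  nlinarith

theorem exists_hopf_barrier_le {p : E → ℝ} {w : E} {ρ C : ℝ} (hC : 0 ≤ C) (hρ : 0 < ρ)
    (hcont : ContinuousOn p (closedBall w ρ)) (hsmooth : ∀ x ∈ ball w ρ, ContDiffAt ℝ 2 p x)
    (hnonneg : ∀ x ∈ closedBall w ρ, 0 ≤ p x) (hpos : ∀ x ∈ ball w ρ, 0 < p x)
    (hlap : ∀ x ∈ ball w ρ, Δ p x ≤ C * p x) :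
    ∃ α ε : ℝ, 0 < α ∧ 0 < ε ∧ ∀ x ∈ closedBall w ρ \ ball w (ρ / 2),
      ε * (Real.exp (-(α * ‖x - w‖ ^ 2)) - Real.exp (-(α * ρ ^ 2))) ≤ p x := by
  set α : ℝ := max 1 ((2 * Module.finrank ℝ E + 1 + C) / ρ ^ 2)
  have hα : 1 ≤ α := le_max_left _ _
  have hαρ : 2 * Module.finrank ℝ E + 1 + C ≤ α * ρ ^ 2 :=
    (div_le_iff₀ (by positivity)).1 (le_max_right _ _)
  set h : E → ℝ := fun y => Real.exp (-(α * ‖y - w‖ ^ 2)) - Real.exp (-(α * ρ ^ 2))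
  have hh : ContDiff ℝ 2 h := (contDiff_exp_neg_mul_norm_sub_sq α w).sub contDiff_const
  have hh_dist : ∀ x, h x = Real.exp (-(α * dist x w ^ 2)) - Real.exp (-(α * ρ ^ 2)) :=
    fun x => by simp [h, dist_eq_norm]
  have hinner : closedBall w (ρ / 2) ⊆ ball w ρ := closedBall_subset_ball (by linarith)
  obtain ⟨xμ, hxμ, hμ⟩ := (isCompact_closedBall w (ρ / 2)).exists_isMinOn
    ⟨w, mem_closedBall_self (by positivity)⟩ (hcont.mono (hinner.trans ball_subset_closedBall))
  have hh₀ : 0 < Real.exp (-(α * (ρ / 2) ^ 2)) - Real.exp (-(α * ρ ^ 2)) := by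
    rw [sub_pos, Real.exp_lt_exp]; nlinarith
  set ε := p xμ / (Real.exp (-(α * (ρ / 2) ^ 2)) - Real.exp (-(α * ρ ^ 2)))
  have hε : 0 < ε := div_pos (hpos xμ (hinner hxμ)) hh₀
  refine ⟨α, ε, by linarith, hε, ?_⟩
  refine ((isCompact_closedBall w ρ).diff isOpen_ball).le_of_laplacian_lt (g := ε • h) hC
    (sdiff_subset_sdiff ball_subset_closedBall ball_subset_closedBall)
    (isOpen_ball.sdiff isClosed_closedBall) (hcont.mono sdiff_subset)
    (hh.continuous.continuousOn.const_smul ε) ?_ (fun x hx => hsmooth x hx.1)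
    (fun x _ => hh.contDiffAt.const_smul ε) (fun x hx => hlap x hx.1) ?_
  · intro x hx
    rcases dist_eq_or_dist_eq_of_mem_annulus hx with hxρ | hxρ
    · simp [hh_dist, hxρ, hnonneg x (mem_closedBall.2 hxρ.le)]
    · simpa [hh_dist, hxρ, ε, hh₀.ne'] using hμ (mem_closedBall.2 hxρ.le)
  · intro x hx
    have hx₂ : ρ / 2 ≤ dist x w := le_of_lt (by simpa using hx.2)
    rw [laplacian_smul ε hh.contDiffAt, Pi.smul_apply, smul_eq_mul, smul_eq_mul,
      show h = (fun y => Real.exp (-(α * ‖y - w‖ ^ 2))) - fun _ => Real.exp (-(α * ρ ^ 2))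
        from rfl, (contDiff_exp_neg_mul_norm_sub_sq α w).contDiffAt.laplacian_sub contDiffAt_const,
      laplacian_const, Pi.zero_apply, sub_zero]
    have h₁ := mul_lt_mul_of_pos_left
      (mul_exp_neg_mul_norm_sub_sq_lt_laplacian hC hα hρ.le hαρ hx₂) hε
    have h₂ := mul_nonneg (mul_nonneg hC hε.le) (Real.exp_pos (-(α * ρ ^ 2))).le
    simp only [Pi.sub_apply]
    nlinarith

theorem hopf_lemma {p : E → ℝ} {w q : E} {ρ C : ℝ} (hC : 0 ≤ C) (hρ : 0 < ρ)
    (hq : dist q w = ρ) (hpq : p q = 0) (hcont : ContinuousOn p (closedBall w ρ))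
    (hdiff : DifferentiableAt ℝ p q) (hsmooth : ∀ x ∈ ball w ρ, ContDiffAt ℝ 2 p x)
    (hnonneg : ∀ x ∈ closedBall w ρ, 0 ≤ p x) (hpos : ∀ x ∈ ball w ρ, 0 < p x)
    (hlap : ∀ x ∈ ball w ρ, Δ p x ≤ C * p x) : 0 < fderiv ℝ p q (w - q) := by
  obtain ⟨α, ε, hα, hε, hbarrier⟩ :=
    exists_hopf_barrier_le hC hρ hcont hsmooth hnonneg hpos hlap
  -- both sides of `hbarrier` vanish at `q`, so their derivatives towards `w` compare
  have hline : HasDerivAt (fun t : ℝ => q + t • (w - q)) (w - q) 0 := by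
    simpa using ((hasDerivAt_id' (0 : ℝ)).smul_const (w - q)).const_add q
  have hp_line : HasDerivAt (fun t : ℝ => p (q + t • (w - q))) (fderiv ℝ p q (w - q)) 0 := by
    have : HasFDerivAt p (fderiv ℝ p q) (q + (0 : ℝ) • (w - q)) := by
      simpa using hdiff.hasFDerivAt
    exact this.comp_hasDerivAt (0 : ℝ) hline
  have hbarrier_line := ((hasDerivAt_exp_neg_mul_norm_segment_sub_sq α q w).sub_const
    (Real.exp (-(α * ρ ^ 2)))).const_mul ε
  rw [← dist_eq_norm, hq] at hbarrier_line
  refine lt_of_lt_of_le (by positivity) (hbarrier_line.le_of_eventually_le_nhdsGT hp_line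
    (by simp [← dist_eq_norm, hq, hpq]) ?_)
  filter_upwards [Ioo_mem_nhdsGT (show (0 : ℝ) < 1 / 2 by norm_num)] with t ht
  refine hbarrier _ ?_
  have hdist : dist (q + t • (w - q)) w = (1 - t) * ρ := by
    rw [dist_eq_norm, show q + t • (w - q) - w = (1 - t) • (q - w) by module, norm_smul,
      Real.norm_eq_abs, abs_of_pos (by linarith [ht.2]), ← dist_eq_norm, hq]
  rw [Set.mem_sdiff, mem_closedBall, mem_ball, not_lt, hdist]
  constructor <;> nlinarith [ht.1, ht.2]

end Hopf

section StrongMaximumPrinciple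

variable {E : Type*} [NormedAddCommGroup E] [InnerProductSpace ℝ E] [FiniteDimensional ℝ E]
  {p : E → ℝ}

theorem eqOn_zero_ball_of_laplacian_le {z : E} {δ C : ℝ} (hC : 0 ≤ C)
    (hp : ∀ x ∈ ball z δ, ContDiffAt ℝ 2 p x) (hp0 : ∀ x ∈ ball z δ, 0 ≤ p x)
    (hlap : ∀ x ∈ ball z δ, Δ p x ≤ C * p x) (hpz : p z = 0) : EqOn p 0 (ball z (δ / 4)) := by
  intro w hw
  rw [mem_ball] at hw
  have hcb : closedBall z (δ / 2) ⊆ ball z δ :=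
    closedBall_subset_ball (by linarith [dist_nonneg.trans_lt hw])
  by_contra hpw
  -- `q` is a zero of `p` nearest to `w`; Hopf's lemma at `q` contradicts `p` being minimal there
  set Z := closedBall z (δ / 2) ∩ p ⁻¹' {0}
  have hZ : IsClosed Z := ContinuousOn.preimage_isClosed_of_isClosed
    (fun x hx => (hp x (hcb hx)).continuousAt.continuousWithinAt)
    isClosed_closedBall isClosed_singleton
  have hzZ : z ∈ Z := ⟨mem_closedBall_self (by linarith [dist_nonneg.trans_lt hw]), hpz⟩
  obtain ⟨q, hqZ, hq⟩ := hZ.exists_infDist_eq_dist ⟨z, hzZ⟩ w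
  set ρ := infDist w Z
  have hρ : 0 < ρ := (hZ.notMem_iff_infDist_pos ⟨z, hzZ⟩).1 fun h => hpw h.2
  have hsub : closedBall w ρ ⊆ closedBall z (δ / 2) := fun x hx => by
    rw [mem_closedBall] at hx ⊢
    linarith [dist_triangle x w z, (infDist_le_dist_of_mem hzZ).trans_lt hw]
  have hball : closedBall w ρ ⊆ ball z δ := hsub.trans hcb
  have hpos : ∀ x ∈ ball w ρ, 0 < p x := fun x hx =>
    (hp0 x (hball (ball_subset_closedBall hx))).lt_of_ne' fun h0 =>
      notMem_of_dist_lt_infDist (s := Z) (by rwa [dist_comm, ← mem_ball])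
        ⟨hsub (ball_subset_closedBall hx), h0⟩
  have hqmin : IsLocalMin p q := by
    filter_upwards [isOpen_ball.mem_nhds (hcb hqZ.1)] with x hx
    rw [show p q = 0 from hqZ.2]; exact hp0 x hx
  have hopf := hopf_lemma hC hρ (by rw [dist_comm, hq]) hqZ.2
    (fun x hx => (hp x (hball hx)).continuousAt.continuousWithinAt)
    ((hp q (hcb hqZ.1)).differentiableAt (by simp))
    (fun x hx => hp x (hball (ball_subset_closedBall hx))) (fun x hx => hp0 x (hball hx)) hpos
    (fun x hx => hlap x (hball (ball_subset_closedBall hx)))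
  simp [hqmin.fderiv_eq_zero] at hopf

variable {Ω : Set E}

theorem isOpen_setOf_eq_zero_of_laplacian_le (hΩ : IsOpen Ω)
    (hp : ∀ x ∈ Ω, ContDiffAt ℝ 2 p x) (hp0 : ∀ x ∈ Ω, 0 ≤ p x)
    (hlap : ∀ x ∈ Ω, ∃ C, 0 ≤ C ∧ ∀ᶠ y in 𝓝 x, Δ p y ≤ C * p y) :
    IsOpen {x | x ∈ Ω ∧ p x = 0} := by
  rw [Metric.isOpen_iff]
  rintro z ⟨hzΩ, hpz⟩
  obtain ⟨C, hC, hCz⟩ := hlap z hzΩ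
  obtain ⟨δ, hδ, hball⟩ := eventually_nhds_iff_ball.1 ((hΩ.eventually_mem hzΩ).and hCz)
  refine ⟨δ / 4, by positivity, fun w hw => ⟨(hball w (ball_subset_ball (by linarith) hw)).1, ?_⟩⟩
  exact eqOn_zero_ball_of_laplacian_le hC (fun x hx => hp x (hball x hx).1)
    (fun x hx => hp0 x (hball x hx).1) (fun x hx => (hball x hx).2) hpz hw

theorem eq_zero_or_pos_of_laplacian_le (hΩ : IsOpen Ω) (hconn : IsPreconnected Ω)
    (hp : ∀ x ∈ Ω, ContDiffAt ℝ 2 p x) (hp0 : ∀ x ∈ Ω, 0 ≤ p x)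
    (hlap : ∀ x ∈ Ω, ∃ C, 0 ≤ C ∧ ∀ᶠ y in 𝓝 x, Δ p y ≤ C * p y) :
    (∀ x ∈ Ω, p x = 0) ∨ ∀ x ∈ Ω, 0 < p x := by
  have hpos : IsOpen (Ω ∩ p ⁻¹' Ioi 0) :=
    ContinuousOn.isOpen_inter_preimage (fun x hx => (hp x hx).continuousAt.continuousWithinAt)
      hΩ isOpen_Ioi
  refine (hconn.subset_or_subset (isOpen_setOf_eq_zero_of_laplacian_le hΩ hp hp0 hlap) hpos
    ?_ ?_).imp (fun h x hx => (h hx).2) fun h x hx => (h hx).2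
  · exact Set.disjoint_left.2 fun x hx hx' => (ne_of_gt hx'.2) hx.2
  · exact fun x hx =>
      (hp0 x hx).eq_or_lt.elim (fun h => Or.inl ⟨hx, h.symm⟩) fun h => Or.inr ⟨hx, h⟩

end StrongMaximumPrinciple

section Asymptotics

theorem TendstoZeroAtInfty.sub {f g : ℂ → ℝ} (hf : TendstoZeroAtInfty f)
    (hg : TendstoZeroAtInfty g) : TendstoZeroAtInfty (f - g) := by
  have := Tendsto.sub hf hg
  rwa [sub_zero] at this

theorem TendstoZeroAtInfty.neg {f : ℂ → ℝ} (hf : TendstoZeroAtInfty f) :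
    TendstoZeroAtInfty (-f) := by
  have := Tendsto.neg hf
  rwa [neg_zero] at this

theorem TendstoZeroAtInfty.exists_lt {f : ℂ → ℝ} (hf : TendstoZeroAtInfty f) {m : ℝ}
    (hm : 0 < m) : ∃ R, ∀ z : ℂ, R ≤ ‖z‖ → f z < m := by
  obtain ⟨t, ht, hsub⟩ := mem_comap.1 (hf.eventually (eventually_lt_nhds hm))
  obtain ⟨R, hR⟩ := mem_atTop_sets.1 ht
  exact ⟨R, fun z hz => hsub (hR _ hz)⟩

theorem LogAsymAtZero.sub {γ δ : ℝ} {f g : ℂ → ℝ} (hf : LogAsymAtZero γ f)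
    (hg : LogAsymAtZero δ g) : LogAsymAtZero (γ - δ) (f - g) := by
  simpa [LogAsymAtZero, sub_div] using Tendsto.sub hf hg

theorem LogAsymAtZero.neg {γ : ℝ} {f : ℂ → ℝ} (hf : LogAsymAtZero γ f) :
    LogAsymAtZero (-γ) (-f) := by
  simpa [LogAsymAtZero, neg_div] using Tendsto.neg hf

theorem tendsto_log_norm_nhdsNE_zero :
    Tendsto (fun z : ℂ => Real.log ‖z‖) (𝓝[≠] 0) atBot :=
  Real.tendsto_log_nhdsGT_zero.comp tendsto_norm_nhdsNE_zero

theorem LogAsymAtZero.add_mul_log_norm {γ : ℝ} {f : ℂ → ℝ} (hf : LogAsymAtZero γ f) (ε : ℝ) :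
    LogAsymAtZero (γ + ε) (fun z => f z + ε * Real.log ‖z‖) := by
  refine (hf.add_const ε).congr' ?_
  filter_upwards [tendsto_log_norm_nhdsNE_zero.eventually (eventually_lt_atBot 0)] with z hz
  field_simp [hz.ne]

theorem LogAsymAtZero.tendsto_atBot {γ : ℝ} {f : ℂ → ℝ} (hf : LogAsymAtZero γ f) (hγ : 0 < γ) :
    Tendsto f (𝓝[≠] 0) atBot := by
  refine (hf.pos_mul_atBot hγ tendsto_log_norm_nhdsNE_zero).congr' ?_
  filter_upwards [tendsto_log_norm_nhdsNE_zero.eventually (eventually_lt_atBot 0)] with z hz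
  exact div_mul_cancel₀ _ hz.ne

end Asymptotics

section TodaSystem

theorem lap_eq_laplacian (f : ℂ → ℝ) : lap f = Δ f :=
  funext fun z => (congrFun (laplacian_eq_iteratedFDeriv_complexPlane f) z).symm

theorem SmoothOffZero.contDiffAt {f : ℂ → ℝ} (hf : SmoothOffZero f) {z : ℂ} (hz : z ≠ 0) :
    ContDiffAt ℝ 2 f z :=
  (ContDiffOn.contDiffAt hf (isOpen_compl_singleton.mem_nhds hz)).of_le
    (WithTop.coe_le_coe.2 le_top)

variable {a b : ℝ} {u v : ℂ → ℝ}

theorem IsTodaSol.laplacian_fst (h : IsTodaSol a b u v) {z : ℂ} (hz : z ≠ 0) :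
    Δ u z = 4 * (Real.exp (a * u z) - Real.exp (v z - u z)) := by
  rw [← lap_eq_laplacian]; exact (h.2.2 z hz).1

theorem IsTodaSol.laplacian_snd (h : IsTodaSol a b u v) {z : ℂ} (hz : z ≠ 0) :
    Δ v z = 4 * (Real.exp (v z - u z) - Real.exp (-(b * v z))) := by
  rw [← lap_eq_laplacian]; exact (h.2.2 z hz).2

theorem isTodaSol_zero : IsTodaSol a b 0 0 := by
  refine ⟨contDiffOn_const, contDiffOn_const, fun z _ => ?_⟩
  simp [lap_eq_laplacian, show (0 : ℂ → ℝ) = fun _ => 0 from rfl]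

theorem hasAsymData_zero : HasAsymData 0 0 (0 : ℂ → ℝ) 0 := by
  have h0 : TendstoZeroAtInfty (0 : ℂ → ℝ) := tendsto_const_nhds
  have h0' : LogAsymAtZero 0 (0 : ℂ → ℝ) := by simp [LogAsymAtZero]
  exact ⟨h0, h0, h0', h0'⟩

theorem IsTodaSol.neg_swap (h : IsTodaSol a b u v) : IsTodaSol b a (-v) (-u) := by
  refine ⟨h.2.1.neg, h.1.neg, fun z hz => ?_⟩
  simp only [lap_eq_laplacian, laplacian_neg, Pi.neg_apply, h.laplacian_fst hz,
    h.laplacian_snd hz]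
  constructor <;> ring_nf

theorem HasAsymData.neg_swap {γ δ : ℝ} (h : HasAsymData γ δ u v) :
    HasAsymData (-δ) (-γ) (-v) (-u) :=
  ⟨h.2.1.neg, h.1.neg, h.2.2.2.neg, h.2.2.1.neg⟩

end TodaSystem

section Comparison

theorem IsLocalMax.of_max_of_le {X : Type*} [TopologicalSpace X] {f g : X → ℝ} {x : X}
    (h : IsLocalMax (fun y => Max.max (f y) (g y)) x) (hgf : g x ≤ f x) : IsLocalMax f x := by
  filter_upwards [h] with y hy
  exact (le_max_left _ _).trans (hy.trans_eq (max_eq_left hgf))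

theorem IsLocalMax.laplacian_nonpos_of_add_harmonicAt {E : Type*} [NormedAddCommGroup E]
    [InnerProductSpace ℝ E] [FiniteDimensional ℝ E] {f g : E → ℝ} {x : E}
    (hf : ContDiffAt ℝ 2 f x) (hg : HarmonicAt g x) (h : IsLocalMax (f + g) x) : Δ f x ≤ 0 := by
  have := IsLocalMax.laplacian_nonpos (f := f + g) (hf.add hg.1) h
  rwa [hf.laplacian_add hg.1, hg.2.self_of_nhds, Pi.zero_apply, add_zero] at this

theorem harmonicAt_const_mul_log_norm (ε : ℝ) {z : ℂ} (hz : z ≠ 0) :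
    HarmonicAt (fun w : ℂ => ε * Real.log ‖w‖) z :=
  (analyticAt_id.harmonicAt_log_norm hz).const_smul (c := ε)

theorem exists_isLocalMax_of_eventually_lt {F : ℂ → ℝ} (hF : ContinuousOn F {0}ᶜ) {z₁ : ℂ}
    (hz₁ : z₁ ≠ 0) (h0 : ∀ᶠ z in 𝓝[≠] 0, F z < F z₁) {R : ℝ} (hR : ‖z₁‖ ≤ R)
    (hsphere : ∀ z : ℂ, ‖z‖ = R → F z < F z₁) :
    ∃ z₀, z₀ ≠ 0 ∧ ‖z₀‖ < R ∧ F z₁ ≤ F z₀ ∧ IsLocalMax F z₀ := by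
  obtain ⟨r, hr, hball⟩ := eventually_nhds_iff_ball.1 (eventually_nhdsWithin_iff.1 h0)
  set r' := min (r / 2) ‖z₁‖
  have hr' : 0 < r' := lt_min (by positivity) (norm_pos_iff.2 hz₁)
  set K := closedBall (0 : ℂ) R \ ball 0 r'
  set U := ball (0 : ℂ) R \ closedBall 0 r'
  have hK0 : K ⊆ {0}ᶜ := fun z hz h0 => hz.2 (by rw [Set.mem_singleton_iff.1 h0]; simpa using hr')
  have hUK : U ⊆ K := sdiff_subset_sdiff ball_subset_closedBall ball_subset_closedBall
  have hz₁K : z₁ ∈ K := ⟨by simpa using hR, by simp [r']⟩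
  have hbdry : ∀ z ∈ K \ U, F z < F z₁ := by
    intro z hz
    rcases dist_eq_or_dist_eq_of_mem_annulus hz with hzR | hzr
    · exact hsphere z (by simpa using hzR)
    · refine hball z ?_ (hK0 hz.1)
      rw [mem_ball, hzr]
      linarith [min_le_left (r / 2) ‖z₁‖]
  obtain ⟨z₀, hz₀, hmax⟩ :=
    ((isCompact_closedBall 0 R).diff isOpen_ball).exists_isMaxOn_mem_subset (hF.mono hK0) hz₁K hbdry
  exact ⟨z₀, hK0 (hUK hz₀), by simpa using hz₀.1, hmax hz₁K,
    hmax.isLocalMax (mem_of_superset ((isOpen_ball.sdiff isClosed_closedBall).mem_nhds hz₀) hUK)⟩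

theorem exists_isLocalMax_max_add_mul_log_norm {f g : ℂ → ℝ} (hf : ContinuousOn f {0}ᶜ)
    (hg : ContinuousOn g {0}ᶜ) (hf_inf : TendstoZeroAtInfty f) (hg_inf : TendstoZeroAtInfty g)
    {γ δ : ℝ} (hf0 : LogAsymAtZero γ f) (hg0 : LogAsymAtZero δ g) (hγ : 0 ≤ γ) (hδ : 0 ≤ δ)
    {z₁ : ℂ} (hz₁ : z₁ ≠ 0) (hpos : 0 < max (f z₁) (g z₁)) :
    ∃ ε z₀, z₀ ≠ 0 ∧ 0 < max (f z₀) (g z₀) ∧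
      IsLocalMax (fun z => max (f z + ε * Real.log ‖z‖) (g z + ε * Real.log ‖z‖)) z₀ := by
  set m := max (f z₁) (g z₁)
  obtain ⟨Rf, hRf⟩ := hf_inf.exists_lt (half_pos hpos)
  obtain ⟨Rg, hRg⟩ := hg_inf.exists_lt (half_pos hpos)
  set R := max (max Rf Rg) (‖z₁‖ + 1)
  have hz₁R : ‖z₁‖ < R := lt_max_of_lt_right (lt_add_one _)
  have hD : 0 < Real.log R - Real.log ‖z₁‖ :=
    sub_pos.2 (Real.log_lt_log (norm_pos_iff.2 hz₁) hz₁R)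
  -- `ε log |z|` pushes the maximum away from `0` while changing it by at most `m / 4` on `|z| ≤ R`
  set ε := m / (4 * (Real.log R - Real.log ‖z₁‖))
  have hε : 0 < ε := by positivity
  have hεD : ε * (Real.log R - Real.log ‖z₁‖) = m / 4 := by
    simp only [ε]; field_simp
  set F := fun z : ℂ => max (f z + ε * Real.log ‖z‖) (g z + ε * Real.log ‖z‖)
  have hF_eq : ∀ z, F z = max (f z) (g z) + ε * Real.log ‖z‖ := fun z => max_add_add_right _ _ _
  have hF : ContinuousOn F {0}ᶜ := by
    have hlog : ContinuousOn (fun z : ℂ => ε * Real.log ‖z‖) {0}ᶜ := fun z hz =>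
      (harmonicAt_const_mul_log_norm ε hz).1.continuousAt.continuousWithinAt
    exact (hf.add hlog).sup (hg.add hlog)
  have h0 : ∀ᶠ z in 𝓝[≠] 0, F z < F z₁ := by
    have hf' := (hf0.add_mul_log_norm ε).tendsto_atBot (by linarith)
    have hg' := (hg0.add_mul_log_norm ε).tendsto_atBot (by linarith)
    filter_upwards [hf'.eventually (eventually_lt_atBot (F z₁)),
      hg'.eventually (eventually_lt_atBot (F z₁))] with z hzf hzg
    exact max_lt hzf hzg
  have hsphere : ∀ z : ℂ, ‖z‖ = R → F z < F z₁ := by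
    intro z hz
    have hfz := hRf z (hz ▸ (le_max_left _ _).trans (le_max_left _ _))
    have hgz := hRg z (hz ▸ (le_max_right _ _).trans (le_max_left _ _))
    rw [hF_eq, hF_eq, hz]
    linarith [max_lt hfz hgz]
  obtain ⟨z₀, hz₀, hz₀R, hFz₀, hmax⟩ :=
    exists_isLocalMax_of_eventually_lt hF hz₁ h0 hz₁R.le hsphere
  refine ⟨ε, z₀, hz₀, ?_, hmax⟩
  have hlog₀ : ε * Real.log ‖z₀‖ ≤ ε * Real.log R :=
    mul_le_mul_of_nonneg_left (Real.log_le_log (norm_pos_iff.2 hz₀) hz₀R.le) hε.le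
  rw [hF_eq, hF_eq] at hFz₀
  linarith

end Comparison

section ComparisonToda

variable {a b : ℝ} {u₁ v₁ u₂ v₂ : ℂ → ℝ}

/-- The system is cooperative: at a point where the larger of `u₁ - u₂`, `v₁ - v₂` is positive,
that difference is strictly subharmonic. -/
theorem IsTodaSol.not_isLocalMax_max_sub_add (ha : 0 < a) (hb : 0 < b)
    (h₁ : IsTodaSol a b u₁ v₁) (h₂ : IsTodaSol a b u₂ v₂) {Λ : ℂ → ℝ} {z : ℂ} (hz : z ≠ 0)
    (hΛ : HarmonicAt Λ z) (hpos : 0 < max (u₁ z - u₂ z) (v₁ z - v₂ z)) :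
    ¬IsLocalMax (fun y => max (u₁ y - u₂ y + Λ y) (v₁ y - v₂ y + Λ y)) z := by
  intro hmax
  have hu : ContDiffAt ℝ 2 (u₁ - u₂) z := (h₁.1.contDiffAt hz).sub (h₂.1.contDiffAt hz)
  have hv : ContDiffAt ℝ 2 (v₁ - v₂) z := (h₁.2.1.contDiffAt hz).sub (h₂.2.1.contDiffAt hz)
  rcases le_total (v₁ z - v₂ z) (u₁ z - u₂ z) with hle | hle
  · have hloc : IsLocalMax (u₁ - u₂ + Λ) z := hmax.of_max_of_le (by linarith)
    have hΔ := hloc.laplacian_nonpos_of_add_harmonicAt hu hΛ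
    rw [(h₁.1.contDiffAt hz).laplacian_sub (h₂.1.contDiffAt hz), h₁.laplacian_fst hz,
      h₂.laplacian_fst hz] at hΔ
    have hlt : u₂ z < u₁ z := by rw [max_eq_left hle] at hpos; linarith
    have e₁ := Real.exp_lt_exp.2 (mul_lt_mul_of_pos_left hlt ha)
    have e₂ := Real.exp_le_exp.2 (show v₁ z - u₁ z ≤ v₂ z - u₂ z by linarith)
    linarith
  · have hloc : IsLocalMax (v₁ - v₂ + Λ) z := by
      have : IsLocalMax (fun y => max (v₁ y - v₂ y + Λ y) (u₁ y - u₂ y + Λ y)) z := by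
        simpa only [max_comm] using hmax
      exact this.of_max_of_le (by linarith)
    have hΔ := hloc.laplacian_nonpos_of_add_harmonicAt hv hΛ
    rw [(h₁.2.1.contDiffAt hz).laplacian_sub (h₂.2.1.contDiffAt hz), h₁.laplacian_snd hz,
      h₂.laplacian_snd hz] at hΔ
    have hlt : v₂ z < v₁ z := by rw [max_eq_right hle] at hpos; linarith
    have e₁ := Real.exp_lt_exp.2 (neg_lt_neg (mul_lt_mul_of_pos_left hlt hb))
    have e₂ := Real.exp_le_exp.2 (show v₂ z - u₂ z ≤ v₁ z - u₁ z by linarith)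
    linarith

theorem IsTodaSol.le_of_hasAsymData (ha : 0 < a) (hb : 0 < b) (h₁ : IsTodaSol a b u₁ v₁)
    (h₂ : IsTodaSol a b u₂ v₂) {γ₁ δ₁ γ₂ δ₂ : ℝ} (hd₁ : HasAsymData γ₁ δ₁ u₁ v₁)
    (hd₂ : HasAsymData γ₂ δ₂ u₂ v₂) (hγ : γ₂ ≤ γ₁) (hδ : δ₂ ≤ δ₁) :
    ∀ z, z ≠ 0 → u₁ z ≤ u₂ z ∧ v₁ z ≤ v₂ z := by
  by_contra! hcon
  obtain ⟨z₁, hz₁, hz₁'⟩ := hcon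
  have hpos : 0 < max ((u₁ - u₂) z₁) ((v₁ - v₂) z₁) := by
    by_cases h : u₁ z₁ ≤ u₂ z₁
    · exact lt_max_of_lt_right (by simp [hz₁' h])
    · exact lt_max_of_lt_left (by simpa using h)
  obtain ⟨ε, z₀, hz₀, hpos₀, hmax⟩ := exists_isLocalMax_max_add_mul_log_norm
    (h₁.1.continuousOn.sub h₂.1.continuousOn) (h₁.2.1.continuousOn.sub h₂.2.1.continuousOn)
    (hd₁.1.sub hd₂.1) (hd₁.2.1.sub hd₂.2.1) (hd₁.2.2.1.sub hd₂.2.2.1)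
    (hd₁.2.2.2.sub hd₂.2.2.2) (sub_nonneg.2 hγ) (sub_nonneg.2 hδ) hz₁ hpos
  exact h₁.not_isLocalMax_max_sub_add ha hb h₂ hz₀ (harmonicAt_const_mul_log_norm ε hz₀) hpos₀ hmax

end ComparisonToda

section Signs

theorem exp_sub_exp_neg_mul_le (a : ℝ) {s B : ℝ} (hs : 0 ≤ s) (hsB : s ≤ B) :
    Real.exp s - Real.exp (-(a * s)) ≤ (Real.exp B + a) * s := by
  have h₁ : Real.exp s * (1 - s) ≤ 1 := by
    calc Real.exp s * (1 - s) ≤ Real.exp s * Real.exp (-s) :=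
          mul_le_mul_of_nonneg_left (by linarith [Real.add_one_le_exp (-s)]) (Real.exp_pos s).le
      _ = 1 := by rw [← Real.exp_add, add_neg_cancel, Real.exp_zero]
  have h₂ := Real.add_one_le_exp (-(a * s))
  have h₃ := mul_le_mul_of_nonneg_left (Real.exp_le_exp.2 hsB) hs
  nlinarith

variable {a b : ℝ} {u v : ℂ → ℝ}

theorem IsTodaSol.laplacian_neg_fst_le (h : IsTodaSol a b u v) {z : ℂ} (hz : z ≠ 0)
    (hu : u z ≤ 0) (hv : v z ≤ 0) {B : ℝ} (hB : -u z ≤ B) :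
    Δ (-u) z ≤ 4 * (Real.exp B + a) * (-u) z := by
  rw [laplacian_neg, Pi.neg_apply, h.laplacian_fst hz, Pi.neg_apply]
  have h₁ := Real.exp_le_exp.2 (show v z - u z ≤ -u z by linarith)
  have h₂ := exp_sub_exp_neg_mul_le a (neg_nonneg.2 hu) hB
  rw [mul_neg, neg_neg] at h₂
  linarith

theorem IsTodaSol.neg_of_hasAsymData (ha : 0 < a) (hb : 0 < b) (h : IsTodaSol a b u v)
    {γ : ℝ} (hd : HasAsymData γ 0 u v) (hγ : 0 < γ) : ∀ z, z ≠ 0 → u z < 0 ∧ v z < 0 := by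
  have hle : ∀ z, z ≠ 0 → u z ≤ 0 ∧ v z ≤ 0 :=
    h.le_of_hasAsymData ha hb isTodaSol_zero hd hasAsymData_zero hγ.le le_rfl
  have hu : ∀ z, z ≠ 0 → u z < 0 := by
    have hconn : IsPreconnected ({0}ᶜ : Set ℂ) := (isConnected_compl_singleton_of_one_lt_rank
      (by simp [Complex.rank_real_complex]) 0).isPreconnected
    have hlap : ∀ z ∈ ({0}ᶜ : Set ℂ), ∃ C, 0 ≤ C ∧ ∀ᶠ y in 𝓝 z, Δ (-u) y ≤ C * (-u) y := by
      intro z hz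
      refine ⟨4 * (Real.exp (-u z + 1) + a), by positivity, ?_⟩
      filter_upwards [isOpen_compl_singleton.mem_nhds hz,
        (h.1.contDiffAt hz).continuousAt.eventually (eventually_gt_nhds (sub_one_lt (u z)))]
        with y hy hyz
      exact h.laplacian_neg_fst_le hy (hle y hy).1 (hle y hy).2 (by linarith)
    rcases eq_zero_or_pos_of_laplacian_le isOpen_compl_singleton hconn
      (fun z hz => (h.1.contDiffAt hz).neg) (fun z hz => neg_nonneg.2 (hle z hz).1) hlap
      with h0 | hpos
    · have hu0 : LogAsymAtZero 0 u := tendsto_const_nhds.congr'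
        (eventually_nhdsWithin_of_forall fun z hz => by simp [neg_eq_zero.1 (h0 z hz)])
      exact absurd (tendsto_nhds_unique hd.2.2.1 hu0) hγ.ne'
    · exact fun z hz => neg_pos.1 (hpos z hz)
  refine fun z hz => ⟨hu z hz, (hle z hz).2.lt_of_ne fun hv0 => ?_⟩
  have hmax : IsLocalMax v z := by
    filter_upwards [isOpen_compl_singleton.mem_nhds hz] with y hy
    rw [hv0]; exact (hle y hy).2
  have hΔ := hmax.laplacian_nonpos (h.2.1.contDiffAt hz)
  rw [h.laplacian_snd hz, hv0, mul_zero, neg_zero, Real.exp_zero, zero_sub] at hΔ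
  linarith [Real.add_one_le_exp (-u z), hu z hz]

end Signs

theorem toda_mixed_sign_bounds_general (a γ₀ γ₁ γ₁star γ₀bar : ℝ) (ha : 0 < a)
    (hγ₀ : 0 < γ₀) (hγ₁' : γ₁ < 0) (hstar' : γ₁star < γ₁) (hbar : γ₀ < γ₀bar)
    (ustar vstar : ℂ → ℝ) (hsolstar : IsTodaSol a a ustar vstar)
    (hasymstar : HasAsymData 0 γ₁star ustar vstar)
    (ubar vbar : ℂ → ℝ) (hsolbar : IsTodaSol a a ubar vbar)
    (hasymbar : HasAsymData γ₀bar 0 ubar vbar)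
    (u v : ℂ → ℝ) (hsol : IsTodaSol a a u v) (hasym : HasAsymData γ₀ γ₁ u v) :
    ∀ z : ℂ, z ≠ 0 →
      (ubar z < 0 ∧ 0 < ustar z ∧ vbar z < 0 ∧ 0 < vstar z) ∧
      (ubar z ≤ u z ∧ u z ≤ ustar z) ∧ (vbar z ≤ v z ∧ v z ≤ vstar z) := by
  have hbar_neg := hsolbar.neg_of_hasAsymData ha ha hasymbar (hγ₀.trans hbar)
  have hstar_pos := hsolstar.neg_swap.neg_of_hasAsymData ha ha
    (by simpa using hasymstar.neg_swap) (by linarith)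
  have hle_star := hsol.le_of_hasAsymData ha ha hsolstar hasym hasymstar hγ₀.le hstar'.le
  have hbar_le := hsolbar.le_of_hasAsymData ha ha hsol hasymbar hasym hbar.le hγ₁'.le
  intro z hz
  obtain ⟨hvstar, hustar⟩ := hstar_pos z hz
  rw [Pi.neg_apply, neg_lt_zero] at hvstar hustar
  exact ⟨⟨(hbar_neg z hz).1, hustar, (hbar_neg z hz).2, hvstar⟩,
    ⟨(hbar_le z hz).1, (hle_star z hz).1⟩, (hbar_le z hz).2, (hle_star z hz).2⟩

/-- Mixed-sign case: any solution with data `(γ₀, γ₁)`, `γ₀ > 0 > γ₁`, is squeezed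
between the solution `(ū, v̄)` with data `(γ̄₀, 0)` and the solution `(u*, v*)`
with data `(0, γ₁*)`. -/
theorem toda_mixed_sign_bounds (a γ₀ γ₁ γ₁star γ₀bar : ℝ) (ha : 0 < a)
    (hγ₀ : 0 < γ₀) (hγ₀' : γ₀ < 2) (hγ₁ : -2 < γ₁) (hγ₁' : γ₁ < 0)
    (hdiff : γ₀ - γ₁ < 2)
    (hstar : -2 < γ₁star) (hstar' : γ₁star < γ₁)
    (hbar : γ₀ < γ₀bar) (hbar' : γ₀bar < 2)
    (ustar vstar : ℂ → ℝ) (hsolstar : IsTodaSol a a ustar vstar)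
    (hasymstar : HasAsymData 0 γ₁star ustar vstar)
    (ubar vbar : ℂ → ℝ) (hsolbar : IsTodaSol a a ubar vbar)
    (hasymbar : HasAsymData γ₀bar 0 ubar vbar)
    (u v : ℂ → ℝ) (hsol : IsTodaSol a a u v) (hasym : HasAsymData γ₀ γ₁ u v) :
    ∀ z : ℂ, z ≠ 0 →
      (ubar z < 0 ∧ 0 < ustar z ∧ vbar z < 0 ∧ 0 < vstar z) ∧
      (ubar z ≤ u z ∧ u z ≤ ustar z) ∧ (vbar z ≤ v z ∧ v z ≤ vstar z) :=
  toda_mixed_sign_bounds_general a γ₀ γ₁ γ₁star γ₀bar ha hγ₀ hγ₁' hstar' hbar ustar vstar hsolstar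
    hasymstar ubar vbar hsolbar hasymbar u v hsol hasym
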